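/- Let C be a real symmetric positive definite n×n matrix with unit diagonal, let b⁽¹⁾, …, b⁽ˢ⁾ ∈ ℝⁿ, and let 1 ≤ k ≤ d ≤ n. Define F(D) := Σ_{j=1}^s max over S ⊆ D with |S| ≤ k of R²_j(S), and F̂(D) := Σ_{j=1}^s max over S ⊆ D with |S| ≤ k of Σ_{i∈S} (b⁽ʲ⁾_i)². Let ∅ = D₀ ⊂ D₁ ⊂ ⋯ ⊂ D_d be the SDS_MA greedy sequence: D_{i+1} = D_i ∪ {x_i}, where x_i ∉ D_i maximizes F̂(D_i ∪ {x}) over all x ∉ D_i. Then F(D_d) ≥ (λmin(C,k)/λmax(C,k)) · (1 − 1/e) · F(D*), where D* is any subset of {1,…,n} of size at most d. -/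

import Mathlib

open scoped Matrix

/-- The smallest eigenvalue of a real symmetric (Hermitian) matrix. -/
noncomputable def lambdaMin {m : Type*} [Fintype m] [DecidableEq m] (A : Matrix m m ℝ) : ℝ :=
  if hA : A.IsHermitian then ⨅ i, hA.eigenvalues i else 0

/-- The largest eigenvalue of a real symmetric (Hermitian) matrix. -/
noncomputable def lambdaMax {m : Type*} [Fintype m] [DecidableEq m] (A : Matrix m m ℝ) : ℝ :=
  if hA : A.IsHermitian then ⨆ i, hA.eigenvalues i else 0

/-- The principal submatrix of `C` on rows and columns in `S`. -/
def subMat {ι : Type*} (C : Matrix ι ι ℝ) (S : Finset ι) : Matrix S S ℝ :=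
  fun i j => C i j

/-- `R²(S) = b_Sᵀ (C_S)⁻¹ b_S`, the squared multiple correlation. -/
noncomputable def R2 {ι : Type*} [Fintype ι] [DecidableEq ι]
    (C : Matrix ι ι ℝ) (b : ι → ℝ) (S : Finset ι) : ℝ :=
  (fun i : S => b i) ⬝ᵥ (subMat C S)⁻¹ *ᵥ (fun i : S => b i)

/-- `λmin(C,k)`: the smallest eigenvalue of any `k × k` principal submatrix of `C`. -/
noncomputable def lambdaMinK {n : ℕ} (C : Matrix (Fin n) (Fin n) ℝ) (k : ℕ) : ℝ :=
  sInf {x | ∃ S : Finset (Fin n), S.card = k ∧ x = lambdaMin (subMat C S)}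

/-- `λmax(C,k)`: the largest eigenvalue of any `k × k` principal submatrix of `C`. -/
noncomputable def lambdaMaxK {n : ℕ} (C : Matrix (Fin n) (Fin n) ℝ) (k : ℕ) : ℝ :=
  sSup {x | ∃ S : Finset (Fin n), S.card = k ∧ x = lambdaMax (subMat C S)}

/-- `Cov(Res(Z|S), X_m) = b_m - C_{m,S} (C_S)⁻¹ b_S`. -/
noncomputable def resCov {ι : Type*} [Fintype ι] [DecidableEq ι]
    (C : Matrix ι ι ℝ) (b : ι → ℝ) (S : Finset ι) (m : ι) : ℝ :=
  b m - (fun i : S => C m i) ⬝ᵥ ((subMat C S)⁻¹ *ᵥ (fun i : S => b i))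

/-- The dictionary selection objective
`F(D) = Σ_j max_{S ⊆ D, |S| ≤ k} R²_j(S)`. -/
noncomputable def Fdict {n s : ℕ} (C : Matrix (Fin n) (Fin n) ℝ)
    (bs : Fin s → Fin n → ℝ) (k : ℕ) (D : Finset (Fin n)) : ℝ :=
  ∑ j, sSup {x | ∃ S ⊆ D, S.card ≤ k ∧ x = R2 C (bs j) S}

/-- The modular approximation objective
`F̂(D) = Σ_j max_{S ⊆ D, |S| ≤ k} Σ_{i∈S} (b⁽ʲ⁾_i)²`. -/
noncomputable def Fma {n s : ℕ} (bs : Fin s → Fin n → ℝ) (k : ℕ)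
    (D : Finset (Fin n)) : ℝ :=
  ∑ j, sSup {x | ∃ S ⊆ D, S.card ≤ k ∧ x = ∑ i ∈ S, (bs j i) ^ 2}

/-!
On a support `S` with `|S| ≤ k` every eigenvalue of `C_S` lies in `[λmin(C,k), λmax(C,k)]`:
extend `S` to a `k`-set `T` and compare the Rayleigh quotients of `C_S` and `C_T`. Hence
`R²(S) = b_Sᵀ C_S⁻¹ b_S` is within the factors `λmax(C,k)⁻¹` and `λmin(C,k)⁻¹` of `‖b_S‖²`,
and `F`, `F̂` agree up to these factors.

Each summand of `F̂` is a top-`k` sum `g A = max_{S ⊆ A, |S| ≤ k} ∑_{i ∈ S} w_i` with `w ≥ 0`, and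
`g A = min_{t ≥ 0} (k t + ∑_{i ∈ A} (w_i - t)⁺)`. The minimising threshold `t` also bounds every
marginal gain `g (A ∪ {x}) - g A` below by `(w_x - t)⁺`, which yields
`g B ≤ g A + ∑_{x ∈ B \ A} (g (A ∪ {x}) - g A)`. With this inequality the classical greedy
argument shrinks `F̂(D*) - F̂(D_i)` by a factor `1 - 1/d` per step, so `F̂(D_d) ≥ (1 - 1/e) F̂(D*)`.
-/

open Matrix Function

namespace Matrix.IsHermitian

variable {m : Type*} [Fintype m] [DecidableEq m] {A : Matrix m m ℝ}

theorem dotProduct_cfc_mulVec (hA : A.IsHermitian) (f : ℝ → ℝ) (x : m → ℝ) :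
    x ⬝ᵥ cfc f A *ᵥ x =
      ∑ i, f (hA.eigenvalues i) * (star (hA.eigenvectorUnitary : Matrix m m ℝ) *ᵥ x) i ^ 2 := by
  set U : Matrix m m ℝ := ↑hA.eigenvectorUnitary
  have hxU : x ᵥ* U = star U *ᵥ x := by
    rw [← mulVec_transpose, star_eq_conjTranspose, conjTranspose_eq_transpose_of_trivial]
  rw [hA.cfc_eq, IsHermitian.cfc, Unitary.conjStarAlgAut_apply, ← mulVec_mulVec, ← mulVec_mulVec,
    dotProduct_mulVec, hxU]
  simp only [dotProduct, mulVec_diagonal, Function.comp_apply, RCLike.ofReal_real_eq_id, id]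
  exact Finset.sum_congr rfl fun i _ => by ring

theorem dotProduct_self_eq (hA : A.IsHermitian) (x : m → ℝ) :
    x ⬝ᵥ x = ∑ i, (star (hA.eigenvectorUnitary : Matrix m m ℝ) *ᵥ x) i ^ 2 := by
  simpa [cfc_const_one ℝ A] using hA.dotProduct_cfc_mulVec (fun _ => 1) x

theorem le_dotProduct_cfc_mulVec (hA : A.IsHermitian) {f : ℝ → ℝ} {c : ℝ}
    (h : ∀ i, c ≤ f (hA.eigenvalues i)) (x : m → ℝ) : c * (x ⬝ᵥ x) ≤ x ⬝ᵥ cfc f A *ᵥ x := by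
  rw [hA.dotProduct_self_eq, hA.dotProduct_cfc_mulVec, Finset.mul_sum]
  gcongr with i
  exact h i

theorem dotProduct_cfc_mulVec_le (hA : A.IsHermitian) {f : ℝ → ℝ} {c : ℝ}
    (h : ∀ i, f (hA.eigenvalues i) ≤ c) (x : m → ℝ) : x ⬝ᵥ cfc f A *ᵥ x ≤ c * (x ⬝ᵥ x) := by
  rw [hA.dotProduct_self_eq, hA.dotProduct_cfc_mulVec, Finset.mul_sum]
  gcongr with i
  exact h i

theorem lambdaMin_le_eigenvalues (hA : A.IsHermitian) (i : m) :
    lambdaMin A ≤ hA.eigenvalues i := by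
  rw [lambdaMin, dif_pos hA]
  exact ciInf_le (Set.finite_range _).bddBelow i

theorem eigenvalues_le_lambdaMax (hA : A.IsHermitian) (i : m) :
    hA.eigenvalues i ≤ lambdaMax A := by
  rw [lambdaMax, dif_pos hA]
  exact le_ciSup (Set.finite_range _).bddAbove i

theorem lambdaMin_mul_le_dotProduct (hA : A.IsHermitian) (x : m → ℝ) :
    lambdaMin A * (x ⬝ᵥ x) ≤ x ⬝ᵥ A *ᵥ x := by
  have := hA.le_dotProduct_cfc_mulVec (f := fun t => t) hA.lambdaMin_le_eigenvalues x
  rwa [cfc_id' ℝ A (show IsSelfAdjoint A from hA)] at this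

theorem dotProduct_le_lambdaMax_mul (hA : A.IsHermitian) (x : m → ℝ) :
    x ⬝ᵥ A *ᵥ x ≤ lambdaMax A * (x ⬝ᵥ x) := by
  have := hA.dotProduct_cfc_mulVec_le (f := fun t => t) hA.eigenvalues_le_lambdaMax x
  rwa [cfc_id' ℝ A (show IsSelfAdjoint A from hA)] at this

theorem eigenvectorBasis_dotProduct_self (hA : A.IsHermitian) (i : m) :
    ⇑(hA.eigenvectorBasis i) ⬝ᵥ ⇑(hA.eigenvectorBasis i) = 1 := by
  have := real_inner_self_eq_norm_sq (hA.eigenvectorBasis i)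
  rw [hA.eigenvectorBasis.orthonormal.1 i, one_pow, EuclideanSpace.inner_eq_star_dotProduct] at this
  simpa [dotProduct_comm] using this

theorem eigenvectorBasis_dotProduct_mulVec (hA : A.IsHermitian) (i : m) :
    ⇑(hA.eigenvectorBasis i) ⬝ᵥ A *ᵥ ⇑(hA.eigenvectorBasis i) = hA.eigenvalues i := by
  rw [hA.mulVec_eigenvectorBasis, dotProduct_smul, hA.eigenvectorBasis_dotProduct_self,
    smul_eq_mul, mul_one]

theorem le_eigenvalues_of_le_dotProduct (hA : A.IsHermitian) {c : ℝ}
    (h : ∀ x, c * (x ⬝ᵥ x) ≤ x ⬝ᵥ A *ᵥ x) (i : m) : c ≤ hA.eigenvalues i := by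
  simpa [hA.eigenvectorBasis_dotProduct_self, hA.eigenvectorBasis_dotProduct_mulVec]
    using h (hA.eigenvectorBasis i)

theorem eigenvalues_le_of_dotProduct_le (hA : A.IsHermitian) {c : ℝ}
    (h : ∀ x, x ⬝ᵥ A *ᵥ x ≤ c * (x ⬝ᵥ x)) (i : m) : hA.eigenvalues i ≤ c := by
  simpa [hA.eigenvectorBasis_dotProduct_self, hA.eigenvectorBasis_dotProduct_mulVec]
    using h (hA.eigenvectorBasis i)

end Matrix.IsHermitian
namespace Matrix.PosDef

variable {m : Type*} [Fintype m] [DecidableEq m] {A : Matrix m m ℝ}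

theorem cfc_inv_eq (hA : A.PosDef) : cfc (·⁻¹ : ℝ → ℝ) A = A⁻¹ := by
  have hsa : IsSelfAdjoint A := hA.isHermitian
  have hspec : ∀ x ∈ spectrum ℝ A, x ≠ 0 := by
    rw [hA.isHermitian.spectrum_real_eq_range_eigenvalues]
    rintro _ ⟨i, rfl⟩
    exact (hA.eigenvalues_pos i).ne'
  rw [cfc_inv (fun x => x) A hspec (ha := hsa), cfc_id' ℝ A hsa, nonsing_inv_eq_ringInverse]

theorem lambdaMin_pos [Nonempty m] (hA : A.PosDef) : 0 < lambdaMin A := by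
  obtain ⟨i, hi⟩ := exists_eq_ciInf_of_finite (f := hA.isHermitian.eigenvalues)
  rw [lambdaMin, dif_pos hA.isHermitian, ← hi]
  exact hA.eigenvalues_pos i

end Matrix.PosDef

section ExtendByZero

variable {α β : Type*} [Fintype α] [Fintype β] {e : α → β}

theorem extend_zero_dotProduct (he : Injective e) (x : α → ℝ) (v : β → ℝ) :
    extend e x 0 ⬝ᵥ v = x ⬝ᵥ (v ∘ e) := by
  refine (Fintype.sum_of_injective e he _ _ (fun j hj => ?_) (fun i => ?_)).symm
  · rw [extend_apply' _ _ _ (by simpa using hj), Pi.zero_apply, zero_mul]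
  · rw [he.extend_apply, Function.comp_apply]

theorem extend_zero_dotProduct_self (he : Injective e) (x : α → ℝ) :
    extend e x 0 ⬝ᵥ extend e x 0 = x ⬝ᵥ x := by
  rw [extend_zero_dotProduct he, extend_comp he]

theorem extend_zero_dotProduct_mulVec (he : Injective e) (M : Matrix β β ℝ) (x : α → ℝ) :
    extend e x 0 ⬝ᵥ M *ᵥ extend e x 0 = x ⬝ᵥ M.submatrix e e *ᵥ x := by
  rw [extend_zero_dotProduct he]
  congr 1
  funext i
  rw [Function.comp_apply, mulVec, dotProduct_comm, extend_zero_dotProduct he, dotProduct_comm]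
  rfl

variable [DecidableEq α] [DecidableEq β] {M : Matrix β β ℝ}

theorem Matrix.IsHermitian.lambdaMin_le_eigenvalues_submatrix (hM : M.IsHermitian)
    (he : Injective e) (i : α) : lambdaMin M ≤ (hM.submatrix e).eigenvalues i := by
  refine (hM.submatrix e).le_eigenvalues_of_le_dotProduct (fun x => ?_) i
  rw [← extend_zero_dotProduct_self he, ← extend_zero_dotProduct_mulVec he]
  exact hM.lambdaMin_mul_le_dotProduct _

theorem Matrix.IsHermitian.eigenvalues_submatrix_le_lambdaMax (hM : M.IsHermitian)
    (he : Injective e) (i : α) : (hM.submatrix e).eigenvalues i ≤ lambdaMax M := by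
  refine (hM.submatrix e).eigenvalues_le_of_dotProduct_le (fun x => ?_) i
  rw [← extend_zero_dotProduct_self he, ← extend_zero_dotProduct_mulVec he]
  exact hM.dotProduct_le_lambdaMax_mul _

end ExtendByZero

section SparseEigenvalues

variable {n k : ℕ} {C : Matrix (Fin n) (Fin n) ℝ}

theorem Matrix.IsHermitian.subMat (hC : C.IsHermitian) (S : Finset (Fin n)) :
    (subMat C S).IsHermitian :=
  hC.submatrix Subtype.val

theorem Matrix.PosDef.subMat (hC : C.PosDef) (S : Finset (Fin n)) : (subMat C S).PosDef :=
  hC.submatrix Subtype.val_injective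

theorem finite_setOf_card_eq (k : ℕ) (g : Finset (Fin n) → ℝ) :
    {x | ∃ S : Finset (Fin n), S.card = k ∧ x = g S}.Finite :=
  (Set.finite_range g).subset (by rintro _ ⟨S, -, rfl⟩; exact ⟨S, rfl⟩)

theorem lambdaMinK_le_lambdaMin {S : Finset (Fin n)} (hS : S.card = k) :
    lambdaMinK C k ≤ lambdaMin (subMat C S) :=
  csInf_le (finite_setOf_card_eq k fun S => lambdaMin (subMat C S)).bddBelow ⟨S, hS, rfl⟩

theorem lambdaMax_le_lambdaMaxK {S : Finset (Fin n)} (hS : S.card = k) :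
    lambdaMax (subMat C S) ≤ lambdaMaxK C k :=
  le_csSup (finite_setOf_card_eq k fun S => lambdaMax (subMat C S)).bddAbove ⟨S, hS, rfl⟩

theorem lambdaMinK_le_eigenvalues_subMat (hC : C.IsHermitian) (hkn : k ≤ n)
    {S : Finset (Fin n)} (hS : S.card ≤ k) (i : S) :
    lambdaMinK C k ≤ (hC.subMat S).eigenvalues i := by
  obtain ⟨T, hST, hT⟩ := Finset.exists_superset_card_eq hS (by rwa [Fintype.card_fin])
  exact (lambdaMinK_le_lambdaMin hT).trans
    ((hC.subMat T).lambdaMin_le_eigenvalues_submatrix (Set.inclusion_injective hST) i)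

theorem eigenvalues_subMat_le_lambdaMaxK (hC : C.IsHermitian) (hkn : k ≤ n)
    {S : Finset (Fin n)} (hS : S.card ≤ k) (i : S) :
    (hC.subMat S).eigenvalues i ≤ lambdaMaxK C k := by
  obtain ⟨T, hST, hT⟩ := Finset.exists_superset_card_eq hS (by rwa [Fintype.card_fin])
  exact ((hC.subMat T).eigenvalues_submatrix_le_lambdaMax (Set.inclusion_injective hST) i).trans
    (lambdaMax_le_lambdaMaxK hT)

theorem exists_finset_card_eq (hkn : k ≤ n) : ∃ S : Finset (Fin n), S.card = k :=
  ⟨Finset.univ.map (Fin.castLEEmb hkn), by simp⟩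

theorem lambdaMinK_pos (hC : C.PosDef) (hk : 1 ≤ k) (hkn : k ≤ n) : 0 < lambdaMinK C k := by
  have hne : {x | ∃ S : Finset (Fin n), S.card = k ∧ x = lambdaMin (subMat C S)}.Nonempty := by
    obtain ⟨S, hS⟩ := exists_finset_card_eq hkn
    exact ⟨_, S, hS, rfl⟩
  obtain ⟨S, hS, hmin⟩ := hne.csInf_mem (finite_setOf_card_eq k _)
  have : Nonempty S := (Finset.card_pos.1 (hS ▸ hk)).to_subtype
  rw [lambdaMinK, hmin]
  exact (hC.subMat S).lambdaMin_pos

theorem lambdaMaxK_pos (hC : C.PosDef) (hk : 1 ≤ k) (hkn : k ≤ n) : 0 < lambdaMaxK C k := by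
  obtain ⟨S, hS⟩ := exists_finset_card_eq hkn
  obtain ⟨i⟩ : Nonempty S := (Finset.card_pos.1 (hS ▸ hk)).to_subtype
  exact (lambdaMinK_pos hC hk hkn).trans_le
    ((lambdaMinK_le_eigenvalues_subMat hC.isHermitian hkn (S := S) hS.le i).trans
      (eigenvalues_subMat_le_lambdaMaxK hC.isHermitian hkn (S := S) hS.le i))

theorem dotProduct_self_subtype {ι : Type*} (b : ι → ℝ) (S : Finset ι) :
    (fun i : S => b i) ⬝ᵥ (fun i : S => b i) = ∑ i ∈ S, b i ^ 2 := by
  rw [dotProduct, ← Finset.sum_coe_sort S]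
  simp only [sq]

theorem R2_le_inv_mul_sum_sq (hC : C.PosDef) (hkn : k ≤ n) {S : Finset (Fin n)}
    (hS : S.card ≤ k) (b : Fin n → ℝ) : R2 C b S ≤ (lambdaMinK C k)⁻¹ * ∑ i ∈ S, b i ^ 2 := by
  rw [R2, ← (hC.subMat S).cfc_inv_eq, ← dotProduct_self_subtype]
  refine (hC.subMat S).isHermitian.dotProduct_cfc_mulVec_le (fun i => ?_) _
  have hk : 1 ≤ k := (Finset.card_pos.2 ⟨i.1, i.2⟩).trans_le hS
  exact inv_anti₀ (lambdaMinK_pos hC hk hkn)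
    (lambdaMinK_le_eigenvalues_subMat hC.isHermitian hkn hS i)

theorem sum_sq_le_lambdaMaxK_mul_R2 (hC : C.PosDef) (hk : 1 ≤ k) (hkn : k ≤ n)
    {S : Finset (Fin n)} (hS : S.card ≤ k) (b : Fin n → ℝ) :
    ∑ i ∈ S, b i ^ 2 ≤ lambdaMaxK C k * R2 C b S := by
  rw [← inv_mul_le_iff₀ (lambdaMaxK_pos hC hk hkn), R2, ← (hC.subMat S).cfc_inv_eq,
    ← dotProduct_self_subtype]
  refine (hC.subMat S).isHermitian.le_dotProduct_cfc_mulVec (fun i => ?_) _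
  exact inv_anti₀ ((hC.subMat S).eigenvalues_pos i)
    (eigenvalues_subMat_le_lambdaMaxK hC.isHermitian hkn hS i)

end SparseEigenvalues

section SparseMax

variable {ι : Type*} {k : ℕ} {f g : Finset ι → ℝ} {D : Finset ι}

noncomputable def sparseMax (k : ℕ) (f : Finset ι → ℝ) (D : Finset ι) : ℝ :=
  sSup {x | ∃ S ⊆ D, S.card ≤ k ∧ x = f S}

theorem finite_setOf_subset_card_le (k : ℕ) (f : Finset ι → ℝ) (D : Finset ι) :
    {x | ∃ S ⊆ D, S.card ≤ k ∧ x = f S}.Finite :=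
  (D.powerset.finite_toSet.image f).subset <| by
    rintro _ ⟨S, hS, -, rfl⟩
    exact ⟨S, Finset.mem_powerset.2 hS, rfl⟩

theorem le_sparseMax {S : Finset ι} (hS : S ⊆ D) (hk : S.card ≤ k) : f S ≤ sparseMax k f D :=
  le_csSup (finite_setOf_subset_card_le k f D).bddAbove ⟨S, hS, hk, rfl⟩

theorem sparseMax_le {c : ℝ} (h : ∀ S ⊆ D, S.card ≤ k → f S ≤ c) : sparseMax k f D ≤ c :=
  csSup_le ⟨f ∅, ∅, D.empty_subset, by simp, rfl⟩ fun _ ⟨S, hS, hk, hx⟩ => hx ▸ h S hS hk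

theorem exists_eq_sparseMax (k : ℕ) (f : Finset ι → ℝ) (D : Finset ι) :
    ∃ S ⊆ D, S.card ≤ k ∧ sparseMax k f D = f S :=
  have hne : {x | ∃ S ⊆ D, S.card ≤ k ∧ x = f S}.Nonempty :=
    ⟨f ∅, ∅, D.empty_subset, by simp, rfl⟩
  hne.csSup_mem (finite_setOf_subset_card_le k f D)

theorem sparseMax_mono : Monotone (sparseMax k f) := fun _ _ hAB =>
  sparseMax_le fun _ hS hk => le_sparseMax (hS.trans hAB) hk

theorem sparseMax_empty : sparseMax k f ∅ = f ∅ :=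
  le_antisymm (sparseMax_le fun S hS _ => by rw [Finset.subset_empty.1 hS])
    (le_sparseMax (Finset.empty_subset _) (by simp))

theorem sparseMax_le_mul {c : ℝ} (hc : 0 ≤ c) (h : ∀ S ⊆ D, S.card ≤ k → f S ≤ c * g S) :
    sparseMax k f D ≤ c * sparseMax k g D :=
  sparseMax_le fun S hS hk => (h S hS hk).trans (by gcongr; exact le_sparseMax hS hk)

end SparseMax

section TopKSum

variable {ι : Type*} {k : ℕ} {w : ι → ℝ}

noncomputable def topKSum (w : ι → ℝ) (k : ℕ) (A : Finset ι) : ℝ :=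
  sparseMax k (fun S => ∑ i ∈ S, w i) A

theorem topKSum_le_threshold {t : ℝ} (ht : 0 ≤ t) (B : Finset ι) :
    topKSum w k B ≤ k * t + ∑ i ∈ B, max (w i - t) 0 := by
  refine sparseMax_le fun T hTB hTk => ?_
  calc ∑ i ∈ T, w i ≤ ∑ i ∈ T, (t + max (w i - t) 0) :=
        Finset.sum_le_sum fun i _ => by linarith [le_max_left (w i - t) 0]
    _ = T.card * t + ∑ i ∈ T, max (w i - t) 0 := by
        rw [Finset.sum_add_distrib, Finset.sum_const, nsmul_eq_mul]
    _ ≤ k * t + ∑ i ∈ B, max (w i - t) 0 := by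
        gcongr

variable [DecidableEq ι]

theorem sum_add_le_topKSum {P B : Finset ι} {x : ι} (hx : x ∉ P) (hPB : insert x P ⊆ B)
    (hP : P.card < k) : ∑ i ∈ P, w i + w x ≤ topKSum w k B := by
  have := le_sparseMax (k := k) (f := fun S => ∑ i ∈ S, w i) hPB
    (by rw [Finset.card_insert_of_notMem hx]; omega)
  rwa [Finset.sum_insert hx, add_comm] at this

theorem exists_threshold_topKSum (hk : 1 ≤ k) (hw : ∀ i, 0 ≤ w i) (A : Finset ι) :
    ∃ t, 0 ≤ t ∧ topKSum w k A = k * t + ∑ i ∈ A, max (w i - t) 0 ∧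
      ∀ x ∉ A, topKSum w k A + max (w x - t) 0 ≤ topKSum w k (insert x A) := by
  obtain ⟨S, hSA, hSk, hS⟩ := exists_eq_sparseMax k (fun S => ∑ i ∈ S, w i) A
  -- `t` is the least weight in `S` when `S` is full and `0` otherwise; `P` frees one slot of `S`.
  obtain ⟨P, t, hPS, hPk, ht0, htS, hPt, hkt⟩ : ∃ P t, P ⊆ S ∧ P.card < k ∧ 0 ≤ t ∧
      (∀ i ∈ S, t ≤ w i) ∧ ∑ i ∈ P, w i + t = ∑ i ∈ S, w i ∧ ((k : ℝ) - S.card) * t = 0 := by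
    rcases hSk.lt_or_eq with hlt | heq
    · exact ⟨S, 0, subset_rfl, hlt, le_rfl, fun i _ => hw i, by simp, by simp⟩
    · obtain ⟨m, hm, hmin⟩ := S.exists_min_image w (Finset.card_pos.1 (by omega))
      exact ⟨S.erase m, w m, S.erase_subset m, by rw [Finset.card_erase_of_mem hm]; omega,
        hw m, hmin, Finset.sum_erase_add S w hm, by simp [heq]⟩
  have hgap : ∀ {B : Finset ι} {x}, x ∉ P → insert x P ⊆ B →
      topKSum w k A - t + w x ≤ topKSum w k B := fun hx hPB => by
    have := sum_add_le_topKSum (w := w) hx hPB hPk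
    rw [topKSum, hS]
    linarith
  have hout : ∀ a ∈ A \ S, max (w a - t) 0 = 0 := fun a ha => by
    rw [Finset.mem_sdiff] at ha
    have := hgap (fun h => ha.2 (hPS h)) (Finset.insert_subset ha.1 (hPS.trans hSA))
    simp only [max_eq_right_iff, tsub_le_iff_right, zero_add]
    linarith
  refine ⟨t, ht0, ?_, fun x hx => ?_⟩
  · rw [← Finset.sum_sdiff hSA, Finset.sum_eq_zero hout, zero_add,
      Finset.sum_congr rfl fun i hi => max_eq_left (sub_nonneg.2 (htS i hi)),
      Finset.sum_sub_distrib, Finset.sum_const, nsmul_eq_mul, topKSum, hS]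
    linear_combination -hkt
  · rcases le_or_gt (w x) t with h | h
    · rw [max_eq_right (by linarith), add_zero]
      exact sparseMax_mono (Finset.subset_insert x A)
    · rw [max_eq_left (by linarith)]
      have := hgap (fun h' => hx (hSA (hPS h')))
        (Finset.insert_subset_insert x (hPS.trans hSA))
      linarith

theorem topKSum_le_add_sum_sdiff (hk : 1 ≤ k) (hw : ∀ i, 0 ≤ w i) (A B : Finset ι) :
    topKSum w k B ≤
      topKSum w k A + ∑ x ∈ B \ A, (topKSum w k (insert x A) - topKSum w k A) := by
  obtain ⟨t, ht0, hA, hmarg⟩ := exists_threshold_topKSum hk hw A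
  calc topKSum w k B ≤ topKSum w k (A ∪ B) := sparseMax_mono Finset.subset_union_right
    _ ≤ k * t + ∑ i ∈ A ∪ B, max (w i - t) 0 := topKSum_le_threshold ht0 _
    _ = topKSum w k A + ∑ x ∈ B \ A, max (w x - t) 0 := by
        rw [← Finset.union_sdiff_self_eq_union, Finset.sum_union Finset.disjoint_sdiff, hA]
        ring
    _ ≤ _ := by
        gcongr with x hx
        linarith [hmarg x (Finset.mem_sdiff.1 hx).2]

end TopKSum

section Greedy

variable {α : Type*} [DecidableEq α] {f : Finset α → ℝ}

theorem greedy_step (hmono : Monotone f)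
    (hcover : ∀ A B, f B ≤ f A + ∑ x ∈ B \ A, (f (insert x A) - f A))
    {A B : Finset α} {x : α} {d : ℕ} (hd : 0 < d) (hB : B.card ≤ d)
    (hx : ∀ y ∉ A, f (insert y A) ≤ f (insert x A)) :
    f B - f (insert x A) ≤ (1 - 1 / d) * (f B - f A) := by
  have hgain : 0 ≤ f (insert x A) - f A := sub_nonneg.2 (hmono (Finset.subset_insert x A))
  have hsum : ∑ y ∈ B \ A, (f (insert y A) - f A) ≤ d * (f (insert x A) - f A) :=
    calc ∑ y ∈ B \ A, (f (insert y A) - f A) ≤ ∑ y ∈ B \ A, (f (insert x A) - f A) :=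
          Finset.sum_le_sum fun y hy => by linarith [hx y (Finset.mem_sdiff.1 hy).2]
      _ = (B \ A).card * (f (insert x A) - f A) := by rw [Finset.sum_const, nsmul_eq_mul]
      _ ≤ d * (f (insert x A) - f A) := by
          gcongr
          exact_mod_cast (Finset.card_le_card Finset.sdiff_subset).trans hB
  have hfrac : (f B - f A) / d ≤ f (insert x A) - f A := by
    rw [div_le_iff₀ (by exact_mod_cast hd)]
    linarith [hcover A B]
  linarith [show (1 - 1 / d) * (f B - f A) = f B - f A - (f B - f A) / d by ring]

theorem greedy_gap_le (hmono : Monotone f)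
    (hcover : ∀ A B, f B ≤ f A + ∑ x ∈ B \ A, (f (insert x A) - f A))
    {D : ℕ → Finset α} {d : ℕ} (hd : 0 < d)
    (hgreedy : ∀ i < d, ∃ x ∉ D i, D (i + 1) = insert x (D i) ∧
      ∀ y ∉ D i, f (insert y (D i)) ≤ f (insert x (D i)))
    {B : Finset α} (hB : B.card ≤ d) :
    ∀ i ≤ d, f B - f (D i) ≤ (1 - 1 / d) ^ i * (f B - f (D 0))
  | 0, _ => by simp
  | i + 1, hi => by
    obtain ⟨x, -, hDx, hx⟩ := hgreedy i hi
    have hq : (0 : ℝ) ≤ 1 - 1 / d := by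
      rw [sub_nonneg, div_le_one (by exact_mod_cast hd)]
      exact_mod_cast hd
    calc f B - f (D (i + 1)) ≤ (1 - 1 / d) * (f B - f (D i)) := by
          rw [hDx]
          exact greedy_step hmono hcover hd hB hx
      _ ≤ (1 - 1 / d) * ((1 - 1 / d) ^ i * (f B - f (D 0))) := by
          gcongr
          exact greedy_gap_le hmono hcover hd hgreedy hB i (by omega)
      _ = (1 - 1 / d) ^ (i + 1) * (f B - f (D 0)) := by ring

theorem greedy_approx (hmono : Monotone f)
    (hcover : ∀ A B, f B ≤ f A + ∑ x ∈ B \ A, (f (insert x A) - f A))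
    {D : ℕ → Finset α} {d : ℕ} (hD0 : D 0 = ∅)
    (hgreedy : ∀ i < d, ∃ x ∉ D i, D (i + 1) = insert x (D i) ∧
      ∀ y ∉ D i, f (insert y (D i)) ≤ f (insert x (D i)))
    {B : Finset α} (hB : B.card ≤ d) :
    (1 - Real.exp (-1)) * (f B - f ∅) ≤ f (D d) - f ∅ := by
  rcases Nat.eq_zero_or_pos d with rfl | hd
  · rw [Finset.card_eq_zero.1 (Nat.le_zero.1 hB), hD0, sub_self, mul_zero]
  have hgap := greedy_gap_le hmono hcover hd hgreedy hB d le_rfl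
  rw [hD0] at hgap
  have hexp : (1 - 1 / d : ℝ) ^ d ≤ Real.exp (-1) :=
    Real.one_sub_div_pow_le_exp_neg (by exact_mod_cast hd)
  have hM : 0 ≤ f B - f ∅ := sub_nonneg.2 (hmono (Finset.empty_subset B))
  nlinarith [mul_le_mul_of_nonneg_right hexp hM]

end Greedy

section Objectives

variable {n s k : ℕ} {C : Matrix (Fin n) (Fin n) ℝ} {bs : Fin s → Fin n → ℝ}

theorem Fma_eq_sum_topKSum (D : Finset (Fin n)) :
    Fma bs k D = ∑ j, topKSum (fun i => bs j i ^ 2) k D :=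
  rfl

theorem Fma_empty : Fma bs k ∅ = 0 := by
  simp [Fma_eq_sum_topKSum, topKSum, sparseMax_empty]

theorem Fma_monotone : Monotone (Fma bs k) := fun _ _ hAB =>
  Finset.sum_le_sum fun _ _ => sparseMax_mono hAB

theorem Fma_le_add_sum_sdiff (hk : 1 ≤ k) (A B : Finset (Fin n)) :
    Fma bs k B ≤ Fma bs k A + ∑ x ∈ B \ A, (Fma bs k (insert x A) - Fma bs k A) := by
  simp only [Fma_eq_sum_topKSum]
  calc ∑ j, topKSum (fun i => bs j i ^ 2) k B
      ≤ ∑ j, (topKSum (fun i => bs j i ^ 2) k A + ∑ x ∈ B \ A,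
          (topKSum (fun i => bs j i ^ 2) k (insert x A) - topKSum (fun i => bs j i ^ 2) k A)) :=
        Finset.sum_le_sum fun j _ => topKSum_le_add_sum_sdiff hk (fun i => sq_nonneg _) A B
    _ = _ := by
        rw [Finset.sum_add_distrib, Finset.sum_comm]
        simp only [Finset.sum_sub_distrib]

theorem Fdict_le_inv_mul_Fma (hC : C.PosDef) (hk : 1 ≤ k) (hkn : k ≤ n) (D : Finset (Fin n)) :
    Fdict C bs k D ≤ (lambdaMinK C k)⁻¹ * Fma bs k D := by
  rw [Fma_eq_sum_topKSum, Finset.mul_sum]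
  exact Finset.sum_le_sum fun j _ =>
    sparseMax_le_mul (inv_nonneg.2 (lambdaMinK_pos hC hk hkn).le) fun S _ hS =>
      R2_le_inv_mul_sum_sq hC hkn hS (bs j)

theorem Fma_le_mul_Fdict (hC : C.PosDef) (hk : 1 ≤ k) (hkn : k ≤ n) (D : Finset (Fin n)) :
    Fma bs k D ≤ lambdaMaxK C k * Fdict C bs k D := by
  rw [Fdict, Finset.mul_sum]
  exact Finset.sum_le_sum fun j _ =>
    sparseMax_le_mul (lambdaMaxK_pos hC hk hkn).le fun S _ hS =>
      sum_sq_le_lambdaMaxK_mul_R2 hC hk hkn hS (bs j)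

end Objectives

theorem sdsma_bound_general {n s k d : ℕ}
    (C : Matrix (Fin n) (Fin n) ℝ) (bs : Fin s → Fin n → ℝ) (hC : C.PosDef)
    (hk1 : 1 ≤ k) (hkd : k ≤ d) (hdn : d ≤ n)
    (D : ℕ → Finset (Fin n)) (hD0 : D 0 = ∅)
    (hgreedy : ∀ i < d, ∃ x ∉ D i, D (i + 1) = insert x (D i) ∧
      ∀ y ∉ D i, Fma bs k (insert y (D i)) ≤ Fma bs k (insert x (D i)))
    (Dstar : Finset (Fin n)) (hstar : Dstar.card ≤ d) :
    lambdaMinK C k / lambdaMaxK C k * (1 - Real.exp (-1)) * Fdict C bs k Dstar ≤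
      Fdict C bs k (D d) := by
  have hkn : k ≤ n := hkd.trans hdn
  have hmin := lambdaMinK_pos hC hk1 hkn
  have hmax := lambdaMaxK_pos hC hk1 hkn
  have he : 0 ≤ 1 - Real.exp (-1) := sub_nonneg.2 (Real.exp_le_one_iff.2 (by norm_num))
  have hgreedy_Fma : (1 - Real.exp (-1)) * Fma bs k Dstar ≤ Fma bs k (D d) := by
    simpa [Fma_empty] using
      greedy_approx Fma_monotone (Fma_le_add_sum_sdiff hk1) hD0 hgreedy hstar
  calc lambdaMinK C k / lambdaMaxK C k * (1 - Real.exp (-1)) * Fdict C bs k Dstar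
      ≤ lambdaMinK C k / lambdaMaxK C k * (1 - Real.exp (-1)) *
          ((lambdaMinK C k)⁻¹ * Fma bs k Dstar) := by
        gcongr
        exact Fdict_le_inv_mul_Fma hC hk1 hkn Dstar
    _ = (lambdaMaxK C k)⁻¹ * ((1 - Real.exp (-1)) * Fma bs k Dstar) := by
        field_simp
    _ ≤ (lambdaMaxK C k)⁻¹ * (lambdaMaxK C k * Fdict C bs k (D d)) :=
        mul_le_mul_of_nonneg_left (hgreedy_Fma.trans (Fma_le_mul_Fdict hC hk1 hkn (D d)))
          (inv_nonneg.2 hmax.le)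
    _ = Fdict C bs k (D d) := by
        field_simp

/-- `SDS_MA` guarantee: the greedy dictionary `D_d` built by maximizing the modular
approximation `F̂` satisfies `F(D_d) ≥ (λmin(C,k)/λmax(C,k)) (1 − 1/e) F(D*)` for any
dictionary `D*` of size at most `d`. -/
theorem sdsma_bound {n s k d : ℕ}
    (C : Matrix (Fin n) (Fin n) ℝ) (bs : Fin s → Fin n → ℝ) (hC : C.PosDef)
    (hdiag : ∀ i, C i i = 1) (hk1 : 1 ≤ k) (hkd : k ≤ d) (hdn : d ≤ n)
    (D : ℕ → Finset (Fin n)) (hD0 : D 0 = ∅)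
    (hgreedy : ∀ i < d, ∃ x ∉ D i, D (i + 1) = insert x (D i) ∧
      ∀ y ∉ D i, Fma bs k (insert y (D i)) ≤ Fma bs k (insert x (D i)))
    (Dstar : Finset (Fin n)) (hstar : Dstar.card ≤ d) :
    lambdaMinK C k / lambdaMaxK C k * (1 - Real.exp (-1)) * Fdict C bs k Dstar ≤
      Fdict C bs k (D d) :=
  sdsma_bound_general C bs hC hk1 hkd hdn D hD0 hgreedy Dstar hstar
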